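/- If G is a torsion abelian group with only finitely many non-power subgroups, then the set π(G) of primes dividing orders of elements of G is finite. -/

import Mathlib

/-!
If infinitely many primes occur as orders of elements, then every cyclic subgroup `⟨x⟩` of prime
order `p` is a non-power subgroup: `G^0` is trivial, and for `m > 0` some element of prime order
`q ∉ {p} ∪ {divisors of m}` lies in `G^m`, which is impossible inside `⟨x⟩`. Since `⟨x⟩` has
cardinality `p`, every such prime is the cardinality of one of the finitely many non-power subgroups.
-/

/-- `G^m`: the subgroup generated by all `m`-th powers of elements of `G`. -/
def powerSubgroup (G : Type*) [Group G] (m : ℕ) : Subgroup G :=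
  Subgroup.closure (Set.range fun g : G => g ^ m)

section PowerSubgroup

variable {G : Type*} [Group G]

theorem powerSubgroup_zero : powerSubgroup G 0 = ⊥ := by
  simp [powerSubgroup, Set.range_const]

theorem pow_mem_powerSubgroup (g : G) (m : ℕ) : g ^ m ∈ powerSubgroup G m :=
  Subgroup.subset_closure ⟨g, rfl⟩

theorem mem_powerSubgroup_of_coprime {y : G} {m : ℕ} (hy : (orderOf y).Coprime m) :
    y ∈ powerSubgroup G m := by
  obtain ⟨k, hk⟩ := exists_pow_eq_self_of_coprime hy.symm
  rw [← hk, pow_right_comm]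
  exact pow_mem_powerSubgroup _ m

theorem orderOf_dvd_of_zpowers_eq_powerSubgroup {x y : G} {m : ℕ}
    (h : Subgroup.zpowers x = powerSubgroup G m) (hy : (orderOf y).Coprime m) :
    orderOf y ∣ orderOf x :=
  orderOf_dvd_of_mem_zpowers (h ▸ mem_powerSubgroup_of_coprime hy)

theorem zpowers_ne_powerSubgroup_of_infinite_primes
    (hS : {p : ℕ | p.Prime ∧ ∃ g : G, orderOf g = p}.Infinite) {x : G} (hx : (orderOf x).Prime)
    (m : ℕ) : Subgroup.zpowers x ≠ powerSubgroup G m := by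
  intro heq
  rcases eq_or_ne m 0 with rfl | hm
  · rw [powerSubgroup_zero, Subgroup.zpowers_eq_bot] at heq
    exact hx.ne_one (heq ▸ orderOf_one)
  obtain ⟨q, ⟨hq, y, rfl⟩, hqx⟩ :=
    (hS.sdiff (insert (orderOf x) m.divisors : Finset ℕ).finite_toSet).nonempty
  simp only [Finset.coe_insert, Set.mem_insert_iff, Finset.mem_coe, Nat.mem_divisors, not_or,
    not_and_or] at hqx
  obtain ⟨hyx, hym | hm'⟩ := hqx
  · have hdvd := orderOf_dvd_of_zpowers_eq_powerSubgroup heq (hq.coprime_iff_not_dvd.2 hym)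
    exact hyx ((Nat.prime_dvd_prime_iff_eq hq hx).1 hdvd)
  · exact hm' hm

end PowerSubgroup

theorem pi_finite_of_torsion_abelian_general {G : Type*} [CommGroup G]
    (h : {H : Subgroup G | ∀ m : ℕ, H ≠ powerSubgroup G m}.Finite) :
    {p : ℕ | p.Prime ∧ ∃ g : G, orderOf g = p}.Finite := by
  by_contra hS
  refine hS ((h.image fun H : Subgroup G => Nat.card H).subset ?_)
  rintro p ⟨hp, g, rfl⟩
  exact ⟨Subgroup.zpowers g, zpowers_ne_powerSubgroup_of_infinite_primes hS hp, Nat.card_zpowers g⟩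

theorem pi_finite_of_torsion_abelian {G : Type*} [CommGroup G]
    (htor : ∀ g : G, IsOfFinOrder g)
    (h : {H : Subgroup G | ∀ m : ℕ, H ≠ powerSubgroup G m}.Finite) :
    {p : ℕ | p.Prime ∧ ∃ g : G, orderOf g = p}.Finite :=
  pi_finite_of_torsion_abelian_general h
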